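/- arXiv:2306.16385 — 11 statements merged into one kernel-verified Lean document; each statement's English description precedes it below -/
import Mathlib

section
/- Let ⋆ be a finite type star operation on a domain D, {𝔞_λ} a family of ⋆-closed ideals of D, and ℱ a filter on the index set. If the filter limit lim_ℱ 𝔞_λ is a nonzero ideal of D, then it is a ⋆-closed ideal. -/
/-- A star operation on a domain `R` with fraction field `K`, viewed as an operation on the
nonzero fractional ideals of `R` in `K`. -/
structure StarOperation (R K : Type*) [CommRing R] [IsDomain R] [Field K] [Algebra R K]
    [IsFractionRing R K] where
  star : FractionalIdeal (nonZeroDivisors R) K → FractionalIdeal (nonZeroDivisors R) K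
  star_spanSingleton : ∀ a : K, a ≠ 0 →
    star (FractionalIdeal.spanSingleton (nonZeroDivisors R) a) =
      FractionalIdeal.spanSingleton (nonZeroDivisors R) a
  star_smul : ∀ a : K, a ≠ 0 → ∀ I, I ≠ 0 →
    star (FractionalIdeal.spanSingleton (nonZeroDivisors R) a * I) =
      FractionalIdeal.spanSingleton (nonZeroDivisors R) a * star I
  le_star : ∀ I, I ≠ 0 → I ≤ star I
  star_mono : ∀ I J, I ≠ 0 → J ≠ 0 → I ≤ J → star I ≤ star J
  star_idem : ∀ I, I ≠ 0 → star (star I) = star I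

/-- A star operation is of finite type if the star of an ideal is the union of the stars of the
nonzero finitely generated fractional ideals contained in it. -/
def StarOperation.IsFiniteType {R K : Type*} [CommRing R] [IsDomain R] [Field K] [Algebra R K]
    [IsFractionRing R K] (s : StarOperation R K) : Prop :=
  ∀ I, I ≠ 0 → ∀ x, x ∈ s.star I →
    ∃ J : FractionalIdeal (nonZeroDivisors R) K,
      J ≠ 0 ∧ (J : Submodule R K).FG ∧ J ≤ I ∧ x ∈ s.star J

/-- The filter limit of a family of ideals. -/
def filterLimitIdeal {R Λ : Type*} [CommRing R] (I : Λ → Ideal R) (F : Filter Λ) : Ideal R where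
  carrier := {r : R | {l | r ∈ I l} ∈ F}
  zero_mem' := by
    simp only [Set.mem_setOf_eq]
    exact Filter.univ_mem' fun l => (I l).zero_mem
  add_mem' := by
    intro a b ha hb
    exact Filter.mem_of_superset (Filter.inter_mem ha hb) fun l hl => (I l).add_mem hl.1 hl.2
  smul_mem' := by
    intro c x hx
    exact Filter.mem_of_superset hx fun l hl => (I l).smul_mem c hl

/-!
By finite type, an element `x` of `L⋆` (where `L = lim_ℱ 𝔞_λ`) already lies in `J⋆` for a finitely
generated `J ⊆ L`. Each of the finitely many generators of `J` lies in `𝔞_λ` for `ℱ`-almost all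
`λ`, hence so does all of `J`, and then `x ∈ J⋆ ⊆ 𝔞_λ⋆ = 𝔞_λ` for `ℱ`-almost all `λ`, i.e.
`x ∈ L`.
-/

theorem Submodule.FG.eventually_le {R M Λ : Type*} [Semiring R] [AddCommMonoid M] [Module R M]
    {N : Submodule R M} (hN : N.FG) {P : Λ → Submodule R M} {F : Filter Λ}
    (h : ∀ x ∈ N, ∀ᶠ l in F, x ∈ P l) : ∀ᶠ l in F, N ≤ P l := by
  obtain ⟨T, rfl⟩ := hN
  filter_upwards [T.eventually_all.2 fun t ht => h t (Submodule.subset_span ht)] with l hl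
  exact Submodule.span_le.2 hl

theorem mem_filterLimitIdeal {R Λ : Type*} [CommRing R] {I : Λ → Ideal R} {F : Filter Λ}
    {r : R} : r ∈ filterLimitIdeal I F ↔ ∀ᶠ l in F, r ∈ I l :=
  Iff.rfl

namespace FractionalIdeal

variable {R P Λ : Type*} [CommRing R] [CommRing P] [Algebra R P] {S : Submonoid R}

theorem eventually_mem_of_mem_coeIdeal_filterLimitIdeal {I : Λ → Ideal R} {F : Filter Λ} {x : P}
    (hx : x ∈ (filterLimitIdeal I F : FractionalIdeal S P)) :
    ∀ᶠ l in F, x ∈ (I l : FractionalIdeal S P) := by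
  obtain ⟨r, hr, rfl⟩ := (mem_coeIdeal S).1 hx
  filter_upwards [mem_filterLimitIdeal.1 hr] with l hl
  exact (mem_coeIdeal S).2 ⟨r, hl, rfl⟩

theorem mem_coeIdeal_filterLimitIdeal_of_eventually (hinj : Function.Injective (algebraMap R P))
    {I : Λ → Ideal R} {F : Filter Λ} [F.NeBot] {x : P}
    (hx : ∀ᶠ l in F, x ∈ (I l : FractionalIdeal S P)) :
    x ∈ (filterLimitIdeal I F : FractionalIdeal S P) := by
  -- `F ≠ ⊥` puts `x` in the image of `R`; injectivity makes its preimage independent of `l`.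
  obtain ⟨l₀, hl₀⟩ := hx.exists
  obtain ⟨r, -, rfl⟩ := (mem_coeIdeal S).1 hl₀
  refine (mem_coeIdeal S).2 ⟨r, ?_, rfl⟩
  filter_upwards [hx] with l hl
  obtain ⟨r', hr', hr'r⟩ := (mem_coeIdeal S).1 hl
  rwa [← hinj hr'r]

theorem eventually_le_of_fg_of_le_filterLimitIdeal {I : Λ → Ideal R} {F : Filter Λ}
    {J : FractionalIdeal S P} (hJ : (J : Submodule R P).FG)
    (hJI : J ≤ (filterLimitIdeal I F : FractionalIdeal S P)) :
    ∀ᶠ l in F, J ≤ (I l : FractionalIdeal S P) :=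
  hJ.eventually_le fun _ hx => eventually_mem_of_mem_coeIdeal_filterLimitIdeal (hJI hx)

end FractionalIdeal

/-- If `⋆` is a finite type star operation on a domain `D` and `{𝔞_λ}` is a family of `⋆`-closed
ideals, then any nonzero filter limit of the family is again `⋆`-closed. -/
theorem filterLimit_star_closed {R K Λ : Type*} [CommRing R] [IsDomain R] [Field K] [Algebra R K]
    [IsFractionRing R K] (s : StarOperation R K) (hft : s.IsFiniteType)
    (a : Λ → Ideal R) (ha0 : ∀ l, a l ≠ ⊥)
    (hstar : ∀ l, s.star ((a l : FractionalIdeal (nonZeroDivisors R) K)) =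
      (a l : FractionalIdeal (nonZeroDivisors R) K))
    (F : Filter Λ) [F.NeBot] (hne : filterLimitIdeal a F ≠ ⊥) :
    s.star ((filterLimitIdeal a F : FractionalIdeal (nonZeroDivisors R) K)) =
      (filterLimitIdeal a F : FractionalIdeal (nonZeroDivisors R) K) := by
  have hL0 : (filterLimitIdeal a F : FractionalIdeal (nonZeroDivisors R) K) ≠ 0 := by
    rwa [Ne, FractionalIdeal.coeIdeal_eq_zero]
  refine le_antisymm (fun x hx => ?_) (s.le_star _ hL0)
  obtain ⟨J, hJ0, hJfg, hJL, hxJ⟩ := hft _ hL0 x hx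
  refine FractionalIdeal.mem_coeIdeal_filterLimitIdeal_of_eventually
    (IsFractionRing.injective R K) ?_
  filter_upwards [FractionalIdeal.eventually_le_of_fg_of_le_filterLimitIdeal hJfg hJL] with l hJl
  have hl0 : (a l : FractionalIdeal (nonZeroDivisors R) K) ≠ 0 := by
    rw [Ne, FractionalIdeal.coeIdeal_eq_zero]
    exact ha0 l
  rw [← hstar l]
  exact s.star_mono J _ hJ0 hl0 hJl hxJ
end

section
/- Let D = ⋂_λ D_λ be an intersection of a family of local overrings of D (inside the fraction field K of D), with 𝔭_λ the center in D of the maximal ideal 𝔪_λ of D_λ. If I is a t-ideal of D (I_t = I, I proper) and J ⊆ I is a nonzero finitely-generated ideal, then J ⊆ 𝔭_λ for some λ. -/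
/-!
If `J` lay in no center `𝔭_λ`, then for each `λ` some `x ∈ J` would be a unit of `D_λ`, so any
`y` with `yJ ⊆ D` satisfies `y = (yx)x⁻¹ ∈ D_λ`; hence `J⁻¹ ⊆ ⋂ D_λ = D`, i.e. `J⁻¹ = D` and
`J_v = D`. Since `I` is a t-ideal containing the finitely generated `J`, this forces `D ⊆ I`,
contradicting `I ≠ D`.
-/

open IsLocalRing FractionalIdeal nonZeroDivisors

theorem Subring.mem_of_mul_mem_of_notMem_maximalIdeal {K : Type*} [Field K] {B : Subring K}
    [IsLocalRing B] {x : B} (hx : x ∉ maximalIdeal B) {y : K} (hy : y * x ∈ B) : y ∈ B := by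
  obtain ⟨u, rfl⟩ := notMem_maximalIdeal.mp hx
  have hyu : y = y * (u : B) * ((u⁻¹ : Bˣ) : B) := by
    rw [mul_assoc, ← Subring.coe_mul, Units.mul_inv, Subring.coe_one, mul_one]
  rw [hyu]
  exact mul_mem hy (u⁻¹ : Bˣ).1.2

theorem FractionalIdeal.mem_one_iff_mem_subring {K : Type*} [Field K] {D : Subring K} {y : K} :
    y ∈ (1 : FractionalIdeal D⁰ K) ↔ y ∈ D := by
  rw [mem_one_iff]
  exact ⟨by rintro ⟨x, rfl⟩; exact x.2, fun hy => ⟨⟨y, hy⟩, rfl⟩⟩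

theorem FractionalIdeal.coeIdeal_inv_eq_one_of_forall_not_le_comap_maximalIdeal
    {K Λ : Type*} [Field K] {D : Subring K} [IsFractionRing D K]
    {Dl : Λ → Subring K} [∀ l, IsLocalRing (Dl l)] (hle : ∀ l, D ≤ Dl l)
    (hint : ⋂ l, (Dl l : Set K) ⊆ D) {J : Ideal D} (hJ0 : J ≠ ⊥)
    (hJ : ∀ l, ¬J ≤ (maximalIdeal (Dl l)).comap (Subring.inclusion (hle l))) :
    (J : FractionalIdeal D⁰ K)⁻¹ = 1 := by
  have hJne : (J : FractionalIdeal D⁰ K) ≠ 0 := coeIdeal_ne_zero.mpr hJ0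
  refine le_antisymm (fun y hy => ?_) ?_
  · rw [mem_one_iff_mem_subring]
    refine hint (Set.mem_iInter.mpr fun l => ?_)
    obtain ⟨x, hxJ, hxl⟩ := SetLike.not_le_iff_exists.mp (hJ l)
    have hyx : y * x ∈ D :=
      mem_one_iff_mem_subring.mp ((mem_inv_iff hJne).mp hy _ (mem_coeIdeal_of_mem _ hxJ))
    exact Subring.mem_of_mul_mem_of_notMem_maximalIdeal hxl (hle l hyx)
  · simpa using inv_anti_mono hJne one_ne_zero coeIdeal_le_one

/-- Let `D = ⋂ D_λ` be an intersection of a family of local overrings inside its fraction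
field `K`, with `𝔭_λ` the center in `D` of the maximal ideal of `D_λ`.  If `I` is a t-ideal of
`D` and `J ⊆ I` is a nonzero finitely generated ideal, then `J ⊆ 𝔭_λ` for some `λ`. -/
theorem fg_subideal_le_center {K Λ : Type*} [Field K] (D : Subring K) [IsFractionRing ↥D K]
    (Dl : Λ → Subring K) [∀ l, IsLocalRing ↥(Dl l)]
    (hle : ∀ l, D ≤ Dl l)
    (hint : (D : Set K) = ⋂ l, ↑(Dl l))
    (p : Λ → Ideal ↥D)
    (hp : ∀ l, p l = (IsLocalRing.maximalIdeal ↥(Dl l)).comap (Subring.inclusion (hle l)))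
    (I : Ideal ↥D) (hItop : I ≠ ⊤)
    (hIt : ∀ J : Ideal ↥D, J ≠ ⊥ → J.FG → J ≤ I →
      (((J : FractionalIdeal (nonZeroDivisors ↥D) K)⁻¹)⁻¹ : FractionalIdeal (nonZeroDivisors ↥D) K)
        ≤ (I : FractionalIdeal (nonZeroDivisors ↥D) K))
    (J : Ideal ↥D) (hJ0 : J ≠ ⊥) (hJfg : J.FG) (hJI : J ≤ I) :
    ∃ l, J ≤ p l := by
  by_contra! hJp
  simp only [hp] at hJp
  have hJinv : (J : FractionalIdeal D⁰ K)⁻¹ = 1 :=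
    coeIdeal_inv_eq_one_of_forall_not_le_comap_maximalIdeal hle hint.ge hJ0 hJp
  have hIone : 1 ≤ (I : FractionalIdeal D⁰ K) := by
    simpa [hJinv] using hIt J hJ0 hJfg hJI
  exact hItop ((coeIdeal_eq_one.mp (le_antisymm coeIdeal_le_one hIone)).trans Ideal.one_eq_top)
end

section
/- Let D be a domain with fraction field K and E ⊆ K nonempty. Then the ring Int^R(E,D) = {φ ∈ K(x) | φ(a) ∈ D for all a ∈ E} is integrally closed if and only if D is integrally closed. -/
variable {K : Type*} [Field K]

theorem eval₂_ne_zero_of_dvd {p q : Polynomial K} (h : p ∣ q) {a : K}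
    (hq : q.eval₂ (RingHom.id K) a ≠ 0) : p.eval₂ (RingHom.id K) a ≠ 0 := by
  obtain ⟨c, rfl⟩ := h
  rw [Polynomial.eval₂_mul] at hq
  exact left_ne_zero_of_mul hq

/-- The ring of integer-valued rational functions on `E ⊆ K` over the subring `D ⊆ K`:
rational functions defined at every point of `E` whose values there lie in `D`. -/
def IntR (E : Set K) (D : Subring K) : Subring (RatFunc K) where
  carrier := {φ | ∀ a ∈ E, φ.denom.eval₂ (RingHom.id K) a ≠ 0 ∧
    RatFunc.eval (RingHom.id K) a φ ∈ D}
  one_mem' := by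
    intro a _
    refine ⟨by simp, ?_⟩
    simpa using one_mem D
  zero_mem' := by
    intro a _
    refine ⟨by simp, ?_⟩
    simpa using zero_mem D
  mul_mem' := by
    intro x y hx hy a ha
    obtain ⟨hx1, hx2⟩ := hx a ha
    obtain ⟨hy1, hy2⟩ := hy a ha
    refine ⟨eval₂_ne_zero_of_dvd (RatFunc.denom_mul_dvd x y) ?_, ?_⟩
    · rw [Polynomial.eval₂_mul]; exact mul_ne_zero hx1 hy1
    · rw [RatFunc.eval_mul _ _ hx1 hy1]; exact mul_mem hx2 hy2
  add_mem' := by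
    intro x y hx hy a ha
    obtain ⟨hx1, hx2⟩ := hx a ha
    obtain ⟨hy1, hy2⟩ := hy a ha
    refine ⟨eval₂_ne_zero_of_dvd (RatFunc.denom_add_dvd x y) ?_, ?_⟩
    · rw [Polynomial.eval₂_mul]; exact mul_ne_zero hx1 hy1
    · rw [RatFunc.eval_add _ _ hx1 hy1]; exact add_mem hx2 hy2
  neg_mem' := by
    intro x hx a ha
    obtain ⟨hx1, hx2⟩ := hx a ha
    have hC : (-1 : RatFunc K) = RatFunc.C (-1) := by
      rw [map_neg, map_one]
    have hd1 : (RatFunc.denom (-1 : RatFunc K)).eval₂ (RingHom.id K) a ≠ 0 := by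
      rw [hC, RatFunc.denom_C]; simp
    have hneg : (-x) = (-1 : RatFunc K) * x := by ring
    constructor
    · refine eval₂_ne_zero_of_dvd ?_ (q := RatFunc.denom (-1 : RatFunc K) * RatFunc.denom x) ?_
      · rw [hneg]; exact RatFunc.denom_mul_dvd _ _
      · rw [Polynomial.eval₂_mul]; exact mul_ne_zero hd1 hx1
    · rw [hneg, RatFunc.eval_mul _ _ hd1 hx1, hC, RatFunc.eval_C]
      simpa using neg_mem hx2

/-- Evaluation at a point `a ∈ E` as a ring homomorphism `IntR E D →+* D`. -/
noncomputable def evalHom (E : Set K) (D : Subring K) (a : K) (ha : a ∈ E) :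
    IntR E D →+* D where
  toFun φ := ⟨RatFunc.eval (RingHom.id K) a φ.1, (φ.2 a ha).2⟩
  map_one' := by
    apply Subtype.ext
    simp
  map_mul' x y := by
    apply Subtype.ext
    exact RatFunc.eval_mul _ _ (x.2 a ha).1 (y.2 a ha).1
  map_zero' := by
    apply Subtype.ext
    simp
  map_add' x y := by
    apply Subtype.ext
    exact RatFunc.eval_add _ _ (x.2 a ha).1 (y.2 a ha).1

/-!
Let `φ = f / g` in lowest terms be integral over `Int^R(E,D)` and let `a ∈ E`. Then `φ` is also
integral over the larger ring of rational functions regular at `a`, where integrality forces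
`g ∣ f ^ n`; evaluating at `a`, coprimality of `f` and `g` gives `g(a) ≠ 0`. Evaluation at `a` is
then a ring map on functions regular at `a`, sending an integral equation of `φ` over `Int^R(E,D)`
to one of `φ(a)` over `D`. Conversely, a constant integral over `D` is integral over `Int^R(E,D)`,
hence lies in it, and is its own value at a point of `E`.
-/

open Polynomial

theorem IsIntegral.exists_dvd_pow {A B : Type*} [CommRing A] [CommRing B] [Algebra A B]
    (hinj : Function.Injective (algebraMap A B)) {x : B} (hx : IsIntegral A x) {f g : A}
    (hfg : x * algebraMap A B g = algebraMap A B f) : ∃ n : ℕ, g ∣ f ^ n := by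
  obtain ⟨p, hp, hpx⟩ := hx
  -- `f = g x` is a root of the monic `p.scaleRoots g`, whose lower coefficients `g` divides.
  have hroot : (p.scaleRoots g).IsRoot f := by
    apply hinj
    rw [map_zero, ← eval₂_at_apply, ← hfg, mul_comm]
    exact scaleRoots_eval₂_eq_zero _ hpx
  refine ⟨p.natDegree, ?_⟩
  have hterm := dvd_term_of_isRoot_of_dvd_terms (p := g) p.natDegree hroot fun j hj ↦ ?_
  · rwa [coeff_scaleRoots_natDegree, hp.leadingCoeff, one_mul] at hterm
  rw [coeff_scaleRoots]
  rcases lt_or_gt_of_ne hj with hlt | hgt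
  · exact ((dvd_pow_self g (Nat.sub_ne_zero_of_lt hlt)).mul_left _).mul_right _
  · simp [coeff_eq_zero_of_natDegree_lt hgt]

theorem IsIntegral.of_subring_le {L : Type*} [CommRing L] {R S : Subring L} (hRS : R ≤ S)
    {x : L} (hx : IsIntegral R x) : IsIntegral S x :=
  hx.map_of_comp_eq (Subring.inclusion hRS) (RingHom.id L) rfl

theorem IsIntegral.map_of_subring_le {L A B : Type*} [CommRing L] [CommRing A] [CommRing B]
    [Algebra A B] {R S : Subring L} (hRS : R ≤ S) (f : R →+* A) (ev : S →+* B)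
    (hcomp : (algebraMap A B).comp f = ev.comp (Subring.inclusion hRS)) {x : L} (hxS : x ∈ S)
    (hx : IsIntegral R x) : IsIntegral A (ev ⟨x, hxS⟩) := by
  let : Algebra R S := (Subring.inclusion hRS).toAlgebra
  have : IsScalarTower R S L := IsScalarTower.of_algebraMap_eq fun _ ↦ rfl
  refine IsIntegral.map_of_comp_eq f ev hcomp ?_
  exact (isIntegral_algebraMap_iff Subtype.val_injective).mp hx

theorem intR_mono {E E' : Set K} {D D' : Subring K} (hE : E' ⊆ E) (hD : D ≤ D') :
    IntR E D ≤ IntR E' D' :=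
  fun _ hφ a ha ↦ ⟨(hφ a (hE ha)).1, hD (hφ a (hE ha)).2⟩

theorem C_mem_intR {E : Set K} {D : Subring K} {d : K} (hd : d ∈ D) : RatFunc.C d ∈ IntR E D :=
  fun _ _ ↦ ⟨by simp [RatFunc.denom_C], by simpa [RatFunc.eval_C] using hd⟩

-- `IntR {a} ⊤` is the local ring of `K[X]` at `X - a`.
theorem mem_intR_singleton_top {a : K} {φ : RatFunc K} :
    φ ∈ IntR {a} ⊤ ↔ φ.denom.eval₂ (RingHom.id K) a ≠ 0 := by
  simp [IntR]

theorem algebraMap_mem_intR_singleton_top (a : K) (p : K[X]) :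
    algebraMap K[X] (RatFunc K) p ∈ IntR {a} ⊤ :=
  mem_intR_singleton_top.mpr (by simp [RatFunc.denom_algebraMap])

noncomputable def evalAt (a : K) : IntR {a} ⊤ →+* K :=
  (⊤ : Subring K).subtype.comp (evalHom {a} ⊤ a rfl)

theorem evalAt_algebraMap (a : K) (p : K[X]) :
    evalAt a ⟨_, algebraMap_mem_intR_singleton_top a p⟩ = p.eval a := by
  simp [evalAt, evalHom]

theorem mem_intR_singleton_top_of_isIntegral {a : K} {φ : RatFunc K}
    (hφ : IsIntegral (IntR {a} ⊤) φ) : φ ∈ IntR {a} ⊤ := by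
  set num : IntR {a} ⊤ := ⟨_, algebraMap_mem_intR_singleton_top a φ.num⟩
  set denom : IntR {a} ⊤ := ⟨_, algebraMap_mem_intR_singleton_top a φ.denom⟩
  have hφ_mul : φ * algebraMap _ _ denom = algebraMap _ _ num := by
    conv_lhs => rw [← RatFunc.num_div_denom φ]
    exact div_mul_cancel₀ _ (by simpa using RatFunc.denom_ne_zero φ)
  obtain ⟨n, hdvd⟩ := hφ.exists_dvd_pow Subtype.val_injective hφ_mul
  have hdvd_at := map_dvd (evalAt a) hdvd
  rw [map_pow, evalAt_algebraMap, evalAt_algebraMap] at hdvd_at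
  have hcop := (RatFunc.isCoprime_num_denom φ).map (Polynomial.evalRingHom a)
  rw [mem_intR_singleton_top, eval₂_id]
  intro hzero
  rw [hzero, zero_dvd_iff] at hdvd_at
  rw [coe_evalRingHom, hzero, eq_zero_of_pow_eq_zero hdvd_at, isCoprime_zero_left] at hcop
  exact not_isUnit_zero hcop

theorem denom_eval_ne_zero_of_isIntegral_intR {E : Set K} {D : Subring K} {a : K} (ha : a ∈ E)
    {φ : RatFunc K} (hφ : IsIntegral (IntR E D) φ) : φ.denom.eval₂ (RingHom.id K) a ≠ 0 :=
  mem_intR_singleton_top.mp <| mem_intR_singleton_top_of_isIntegral <|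
    hφ.of_subring_le (intR_mono (Set.singleton_subset_iff.mpr ha) le_top)

theorem isIntegral_eval_of_isIntegral_intR {E : Set K} {D : Subring K} {a : K} (ha : a ∈ E)
    {φ : RatFunc K} (hφ : IsIntegral (IntR E D) φ) :
    IsIntegral D (RatFunc.eval (RingHom.id K) a φ) :=
  hφ.map_of_subring_le (intR_mono (Set.singleton_subset_iff.mpr ha) le_top) (evalHom E D a ha)
    (evalAt a) rfl (mem_intR_singleton_top.mpr (denom_eval_ne_zero_of_isIntegral_intR ha hφ))

theorem isIntegral_C_intR {E : Set K} {D : Subring K} {x : K} (hx : IsIntegral D x) :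
    IsIntegral (IntR E D) (RatFunc.C x) :=
  hx.map_of_comp_eq ((RatFunc.C.comp D.subtype).codRestrict _ fun d ↦ C_mem_intR d.2) RatFunc.C rfl

theorem intR_integrallyClosed_iff_general {K : Type*} [Field K] (D : Subring K)
    (E : Set K) (hE : E.Nonempty) :
    (∀ φ : RatFunc K, IsIntegral ↥(IntR E D) φ → φ ∈ IntR E D) ↔
      (∀ x : K, IsIntegral ↥D x → x ∈ D) := by
  constructor
  · intro hIntR x hx
    obtain ⟨a, ha⟩ := hE
    simpa using (hIntR _ (isIntegral_C_intR hx) a ha).2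
  · intro hD φ hφ a ha
    exact ⟨denom_eval_ne_zero_of_isIntegral_intR ha hφ,
      hD _ (isIntegral_eval_of_isIntegral_intR ha hφ)⟩

/-- `Int^R(E,D)` is integrally closed (in `K(x)`) if and only if `D` is integrally closed
(in its fraction field `K`). -/
theorem intR_integrallyClosed_iff {K : Type*} [Field K] (D : Subring K) [IsFractionRing ↥D K]
    (E : Set K) (hE : E.Nonempty) :
    (∀ φ : RatFunc K, IsIntegral ↥(IntR E D) φ → φ ∈ IntR E D) ↔
      (∀ x : K, IsIntegral ↥D x → x ∈ D) :=
  intR_integrallyClosed_iff_general D E hE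
end

section
/- Let D be a PVD with maximal ideal 𝔪 and associated valuation domain V, and suppose 𝔪 is principal as an ideal of V. Then V is a finitely-generated D-module if and only if the residue field extension V/𝔪 over D/𝔪 has finite degree. -/
/-! Finiteness of `V` over `D` passes to the quotient `V/𝔪`, on which `D` acts through `D/𝔪`.
Conversely, lifts of finitely many generators of `V/𝔪` over `D/𝔪`, together with `1`, generate `V`
over `D`: they generate modulo `𝔪`, and `𝔪 ⊆ D = D • 1`. -/

open Function Submodule

theorem Module.Finite.of_finite_quotient_of_subset_range {R A : Type*} [CommRing R] [CommRing A]
    [Algebra R A] (J : Ideal A) [Module.Finite R (A ⧸ J)]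
    (hJ : (J : Set A) ⊆ Set.range (algebraMap R A)) : Module.Finite R A := by
  classical
  obtain ⟨s, hs⟩ := Module.finite_def.mp ‹Module.Finite R (A ⧸ J)›
  let f := (Ideal.Quotient.mkₐ R J).toLinearMap
  have hf : Surjective f := Ideal.Quotient.mk_surjective
  let t : Finset A := insert 1 (s.image (surjInv hf))
  have hker : LinearMap.ker f ≤ span R (t : Set A) := by
    intro x hx
    obtain ⟨r, rfl⟩ := hJ (Ideal.Quotient.eq_zero_iff_mem.mp hx)
    rw [Algebra.algebraMap_eq_smul_one]
    exact smul_mem _ r (subset_span (Finset.mem_insert_self _ _))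
  have hmap : (span R (t : Set A)).map f = ⊤ := by
    rw [← span_image, eq_top_iff, ← hs]
    exact span_mono fun y hy ↦
      ⟨surjInv hf y, Finset.mem_insert_of_mem (Finset.mem_image_of_mem _ hy), surjInv_eq hf y⟩
  rw [LinearMap.map_eq_top_iff (LinearMap.range_eq_top.mpr hf), sup_eq_left.mpr hker] at hmap
  exact ⟨⟨t, hmap⟩⟩

theorem pvd_module_finite_iff_residue_finite_general {V : Type*} [CommRing V] [IsDomain V]
    [ValuationRing V] (D : Subring V) [IsLocalRing ↥D]
    (hshare : Subtype.val '' ((IsLocalRing.maximalIdeal ↥D : Ideal ↥D) : Set ↥D) =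
      ((IsLocalRing.maximalIdeal V : Ideal V) : Set V))
    (hcomap : IsLocalRing.maximalIdeal ↥D ≤ (IsLocalRing.maximalIdeal V).comap D.subtype) :
    Module.Finite ↥D V ↔
      @Module.Finite (↥D ⧸ IsLocalRing.maximalIdeal ↥D) (V ⧸ IsLocalRing.maximalIdeal V) _ _
        ((Ideal.quotientMap (IsLocalRing.maximalIdeal V) D.subtype hcomap).toModule) := by
  let := (Ideal.quotientMap (IsLocalRing.maximalIdeal V) D.subtype hcomap).toAlgebra
  have : IsScalarTower D (D ⧸ IsLocalRing.maximalIdeal D) (V ⧸ IsLocalRing.maximalIdeal V) := by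
    constructor
    rintro r ⟨q⟩ ⟨x⟩
    exact congrArg (Ideal.Quotient.mk _) (mul_assoc _ _ _)
  constructor
  · intro _
    exact Module.Finite.of_restrictScalars_finite D (D ⧸ IsLocalRing.maximalIdeal D) _
  · intro _
    have := Module.Finite.trans (R := D) (D ⧸ IsLocalRing.maximalIdeal D)
      (V ⧸ IsLocalRing.maximalIdeal V)
    refine .of_finite_quotient_of_subset_range (IsLocalRing.maximalIdeal V) ?_
    rw [← hshare]
    exact Set.image_subset_range _ _

/-- Let `D` be a pseudovaluation domain with associated valuation domain `V` sharing the same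
maximal ideal `𝔪`, with `𝔪` principal as an ideal of `V`.  Then `V` is a finitely generated
`D`-module if and only if the residue field extension `V/𝔪` over `D/𝔪` has finite degree. -/
theorem pvd_module_finite_iff_residue_finite {V : Type*} [CommRing V] [IsDomain V]
    [ValuationRing V] (D : Subring V) [IsLocalRing ↥D]
    (hshare : Subtype.val '' ((IsLocalRing.maximalIdeal ↥D : Ideal ↥D) : Set ↥D) =
      ((IsLocalRing.maximalIdeal V : Ideal V) : Set V))
    (hprin : (IsLocalRing.maximalIdeal V).IsPrincipal)
    (hcomap : IsLocalRing.maximalIdeal ↥D ≤ (IsLocalRing.maximalIdeal V).comap D.subtype) :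
    Module.Finite ↥D V ↔
      @Module.Finite (↥D ⧸ IsLocalRing.maximalIdeal ↥D) (V ⧸ IsLocalRing.maximalIdeal V) _ _
        ((Ideal.quotientMap (IsLocalRing.maximalIdeal V) D.subtype hcomap).toModule) :=
  pvd_module_finite_iff_residue_finite_general D hshare hcomap
end

section
/- Let D be a PVD with maximal ideal 𝔪 and associated valuation domain V such that 𝔪 = tV is principal in V and [V/𝔪 : D/𝔪] = n < ∞, with t₁,...,tₙ ∈ V× units whose residues form a D/𝔪-basis of V/𝔪. Then 𝔪 = (t t₁, ..., t tₙ)D is finitely generated as an ideal of D. -/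
/-! Write `x ∈ 𝔪` as `t v`. Lifting the coordinates of the residue of `v` in the basis gives
`v = ∑ dᵢ tᵢ + t w` with `dᵢ ∈ D`, so `x = ∑ dᵢ (t tᵢ) + t² w`. The last term is
`(t w t₁⁻¹) (t t₁)`, and `t w t₁⁻¹ ∈ tV = 𝔪 ⊆ D` because `t₁` is a unit of `V`. -/

theorem exists_sub_sum_mem_of_basis {R S ι : Type*} [CommRing R] [CommRing S] [Fintype ι]
    (f : R →+* S) {I : Ideal R} {J : Ideal S} (h : I ≤ J.comap f) (u : ι → S)
    (b : @Module.Basis ι (R ⧸ I) (S ⧸ J) _ _ (Ideal.quotientMap J f h).toModule)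
    (hb : ∀ i, b i = Ideal.Quotient.mk J (u i)) (s : S) :
    ∃ r : ι → R, s - ∑ i, f (r i) * u i ∈ J := by
  let := (Ideal.quotientMap J f h).toModule
  choose r hr using fun i => Ideal.Quotient.mk_surjective (b.repr (Ideal.Quotient.mk J s) i)
  refine ⟨r, Ideal.Quotient.eq_zero_iff_mem.mp ?_⟩
  rw [map_sub, map_sum, sub_eq_zero]
  conv_lhs => rw [← b.sum_repr (Ideal.Quotient.mk J s)]
  refine Finset.sum_congr rfl fun i _ => ?_
  rw [hb i, ← hr i, RingHom.smul_toAlgebra, Ideal.quotientMap_mk, map_mul]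

theorem mem_span_mul_of_forall_sub_sum_mem {V ι : Type*} [CommRing V] [Fintype ι]
    (D : Subring V) {t : V} (htD : (Ideal.span {t} : Set V) ⊆ D) (u : ι → V) {i₀ : ι}
    (hu : IsUnit (u i₀)) (hres : ∀ v, ∃ d : ι → D, v - ∑ i, d i * u i ∈ Ideal.span {t})
    {x : D} (hx : (x : V) ∈ Ideal.span {t}) :
    x ∈ Ideal.span {y : D | ∃ i, (y : V) = t * u i} := by
  have hmul : ∀ v, ∃ d : D, (d : V) = t * v := fun v =>
    ⟨⟨t * v, htD (Ideal.mul_mem_right _ _ (Ideal.mem_span_singleton_self t))⟩, rfl⟩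
  choose g hg using fun i => hmul (u i)
  have hg_mem : ∀ i, g i ∈ Ideal.span {y : D | ∃ i, (y : V) = t * u i} :=
    fun i => Ideal.subset_span ⟨i, hg i⟩
  obtain ⟨v, hv⟩ := Ideal.mem_span_singleton'.mp hx
  obtain ⟨d, hd⟩ := hres v
  obtain ⟨w, hw⟩ := Ideal.mem_span_singleton'.mp hd
  obtain ⟨e, he⟩ := hmul (w * ↑hu.unit⁻¹)
  have hx_eq : x = ∑ i, d i * g i + e * g i₀ := by
    apply Subtype.ext
    have hsum : ∑ i, (d i : V) * (t * u i) = t * ∑ i, d i * u i := by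
      rw [Finset.mul_sum]; exact Finset.sum_congr rfl fun i _ => by ring
    simp only [Subring.coe_add, Subring.coe_mul, AddSubmonoidClass.coe_finsetSum, he, hg, hsum]
    linear_combination (-t * t * w) * hu.val_inv_mul - hv - t * hw
  rw [hx_eq]
  exact Ideal.add_mem _ (Ideal.sum_mem _ fun i _ => Ideal.mul_mem_left _ _ (hg_mem i))
    (Ideal.mul_mem_left _ _ (hg_mem i₀))

/-- Let `D` be a pseudovaluation domain with associated valuation domain `V` sharing the same
maximal ideal `𝔪 = tV`, principal in `V`, where the residue field `V/𝔪` has a `D/𝔪`-basis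
given by the residues of units `t₁, …, tₙ` of `V`.  Then `𝔪 = (t t₁, …, t tₙ)D` is a finitely
generated ideal of `D`. -/
theorem pvd_maximalIdeal_fg {V : Type*} [CommRing V] [IsDomain V]
    [ValuationRing V] (D : Subring V) [IsLocalRing ↥D]
    (hshare : Subtype.val '' ((IsLocalRing.maximalIdeal ↥D : Ideal ↥D) : Set ↥D) =
      ((IsLocalRing.maximalIdeal V : Ideal V) : Set V))
    (hcomap : IsLocalRing.maximalIdeal ↥D ≤ (IsLocalRing.maximalIdeal V).comap D.subtype)
    (t : V) (ht : IsLocalRing.maximalIdeal V = Ideal.span {t})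
    (n : ℕ) (u : Fin n → V) (hu : ∀ i, IsUnit (u i))
    (b : @Module.Basis (Fin n) (↥D ⧸ IsLocalRing.maximalIdeal ↥D) (V ⧸ IsLocalRing.maximalIdeal V) _ _
      ((Ideal.quotientMap (IsLocalRing.maximalIdeal V) D.subtype hcomap).toModule))
    (hb : ∀ i, b i = Ideal.Quotient.mk (IsLocalRing.maximalIdeal V) (u i)) :
    IsLocalRing.maximalIdeal ↥D = Ideal.span {x : ↥D | ∃ i, (x : V) = t * u i} := by
  have ht_mem : t ∈ IsLocalRing.maximalIdeal V := ht ▸ Ideal.mem_span_singleton_self t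
  apply le_antisymm
  · intro x hx
    let := (Ideal.quotientMap (IsLocalRing.maximalIdeal V) D.subtype hcomap).toModule
    obtain ⟨i₀⟩ := b.index_nonempty
    have htD : (Ideal.span {t} : Set V) ⊆ D := by
      rw [← ht, ← hshare]; exact Set.image_subset_range _ _ |>.trans Subtype.range_coe.le
    refine mem_span_mul_of_forall_sub_sum_mem D htD u (hu i₀) (fun v => ?_) (ht ▸ hcomap hx)
    simpa [ht] using exists_sub_sum_mem_of_basis D.subtype hcomap u b hb v
  · rw [Ideal.span_le]
    rintro x ⟨i, hxi⟩
    have hx : (x : V) ∈ Subtype.val '' (IsLocalRing.maximalIdeal D : Set D) :=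
      hshare ▸ hxi ▸ Ideal.mul_mem_right _ _ ht_mem
    exact Subtype.val_injective.mem_set_image.mp hx
end

section
/- Let V be a valuation domain with valuation v, value group Γ, maximal ideal 𝔪, and fraction field K. Suppose the residue field V/𝔪 is not algebraically closed, so there exists a monic non-constant polynomial f ∈ V[x] of degree n with f(d) a unit of V for all d ∈ V. Then for all nonzero a₁, a₂ ∈ K, v(a₁ⁿ f(a₂/a₁)) = min{n·v(a₁), n·v(a₂)}. -/
/-!
If `v a₂ ≤ v a₁` then `a₂ / a₁` is integral and `f (a₂ / a₁)` is a unit, so the value is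
`v a₁ ^ n`. Otherwise `a₁ / a₂` lies in the maximal ideal and
`a₁ ^ n f (a₂ / a₁) = a₂ ^ n f.reverse (a₁ / a₂)`; the reversed polynomial has integral
coefficients and constant term `1`, so it is a unit there and the value is `v a₂ ^ n`.
-/

open Polynomial

namespace Polynomial

variable {K : Type*} [Field K]

theorem pow_natDegree_mul_eval_div (f : K[X]) {a b : K} (ha : a ≠ 0) (hb : b ≠ 0) :
    a ^ f.natDegree * f.eval (b / a) = b ^ f.natDegree * f.reverse.eval (a / b) := by
  let _ : Invertible (b / a) := invertibleOfNonzero (div_ne_zero hb ha)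
  have h := eval₂_reverse_mul_pow (RingHom.id K) (b / a) f
  rw [invOf_eq_inv, inv_div] at h
  rw [← eval₂_id, ← h, eval₂_id, div_pow]
  field_simp

end Polynomial

namespace Valuation

variable {R Γ₀ : Type*} [CommRing R] [LinearOrderedCommGroupWithZero Γ₀] (v : Valuation R Γ₀)

theorem map_eval_le_one {p : R[X]} (hp : ∀ i, v (p.coeff i) ≤ 1) {x : R} (hx : v x ≤ 1) :
    v (p.eval x) ≤ 1 := by
  rw [eval_eq_sum]
  refine v.map_sum_le fun i _ => ?_
  rw [v.map_mul, v.map_pow]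
  exact mul_le_one' (hp i) (pow_le_one' hx i)

theorem map_eval_eq_one_of_lt_one {p : R[X]} (hp : ∀ i, v (p.coeff i) ≤ 1)
    (hp₀ : v (p.coeff 0) = 1) {x : R} (hx : v x < 1) : v (p.eval x) = 1 := by
  have hdivX : v (p.divX.eval x * x) < 1 := by
    rw [v.map_mul]
    have hq : v (p.divX.eval x) ≤ 1 :=
      v.map_eval_le_one (fun i => by rw [coeff_divX]; exact hp _) hx.le
    exact (mul_le_of_le_one_left' hq).trans_lt hx
  rw [← divX_mul_X_add p, eval_add, eval_mul, eval_X, eval_C,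
    v.map_add_eq_of_lt_right (hp₀ ▸ hdivX), hp₀]

end Valuation

theorem val_pow_mul_eval_unitValued_general {K Γ₀ : Type*} [Field K]
    [LinearOrderedCommGroupWithZero Γ₀] (v : Valuation K Γ₀)
    (f : Polynomial K) (hmonic : f.Monic)
    (hcoeff : ∀ i, v (f.coeff i) ≤ 1)
    (hunit : ∀ d : K, v d ≤ 1 → v (f.eval d) = 1)
    (a₁ a₂ : K) (h1 : a₁ ≠ 0) :
    v (a₁ ^ f.natDegree * f.eval (a₂ / a₁)) =
      max (v a₁ ^ f.natDegree) (v a₂ ^ f.natDegree) := by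
  have hv₁ : 0 < v a₁ := v.pos_iff.mpr h1
  rcases le_or_gt (v a₂) (v a₁) with h | h
  · have hquot : v (a₂ / a₁) ≤ 1 := by rwa [v.map_div, div_le_one₀ hv₁]
    rw [v.map_mul, hunit _ hquot, mul_one, v.map_pow, max_eq_left (pow_le_pow_left₀ zero_le h _)]
  · have h2 : a₂ ≠ 0 := v.ne_zero_iff.mp (hv₁.trans h).ne'
    have hquot : v (a₁ / a₂) < 1 := by rwa [v.map_div, div_lt_one₀ (hv₁.trans h)]
    have hrev : v (f.reverse.eval (a₁ / a₂)) = 1 :=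
      v.map_eval_eq_one_of_lt_one (fun i => by rw [coeff_reverse]; exact hcoeff _)
        (by rw [coeff_zero_reverse, hmonic.leadingCoeff, v.map_one]) hquot
    rw [f.pow_natDegree_mul_eval_div h1 h2, v.map_mul, hrev, mul_one, v.map_pow,
      max_eq_right (pow_le_pow_left₀ zero_le h.le _)]

/-- Let `V` be the valuation ring of a (multiplicative) valuation `v` on `K`, and let
`f ∈ V[x]` be a monic nonconstant polynomial that is unit-valued on `V`.  Then for all nonzero
`a₁, a₂ ∈ K`, `v(a₁ⁿ f(a₂/a₁)) = max (v a₁ ^ n) (v a₂ ^ n)` (which, in additive notation, is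
`min (n v(a₁), n v(a₂))`), where `n = deg f`. -/
theorem val_pow_mul_eval_unitValued {K Γ₀ : Type*} [Field K]
    [LinearOrderedCommGroupWithZero Γ₀] (v : Valuation K Γ₀)
    (f : Polynomial K) (hmonic : f.Monic) (hdeg : 0 < f.natDegree)
    (hcoeff : ∀ i, v (f.coeff i) ≤ 1)
    (hunit : ∀ d : K, v d ≤ 1 → v (f.eval d) = 1)
    (a₁ a₂ : K) (h1 : a₁ ≠ 0) (h2 : a₂ ≠ 0) :
    v (a₁ ^ f.natDegree * f.eval (a₂ / a₁)) =
      max (v a₁ ^ f.natDegree) (v a₂ ^ f.natDegree) :=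
  val_pow_mul_eval_unitValued_general v f hmonic hcoeff hunit a₁ a₂ h1
end

section
/- Let V be a valuation domain with valuation v, nondivisible value group Γ, and fraction field K. Fix a, b, c ∈ K with v(a), v(b) > 0, v(a) > v(b), and n ∈ ℕ with n > 0 such that v(a)/n ∉ Γ and v(b)/n ∉ Γ (as elements of Γ⊗ℚ). Define φ(x) = ((x−c)ⁿ + a)/((x−c)ⁿ + b). Then for every d ∈ K: v(φ(d)) = 0 if n·v(d−c) < v(b); v(φ(d)) = n·v(d−c) − v(b) if v(b) < n·v(d−c) < v(a); and v(φ(d)) = v(a) − v(b) if n·v(d−c) > v(a). In particular φ(d) ∈ V for all d ∈ K, i.e., φ ∈ Int^R(K,V). -/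
/-! `v((d-c)ⁿ)` equals neither `v(a)` nor `v(b)`, since these are nonzero and not `n`-th powers
in the value group. So both numerator and denominator of `φ(d)` have the larger of the two values
of their summands, and `v(φ(d)) = max(v(d-c)ⁿ, v a) / max(v(d-c)ⁿ, v b)`, which is at most `1`
because `v a < v b`. -/

namespace Valuation

variable {K Γ₀ : Type*} [LinearOrderedCommGroupWithZero Γ₀]

theorem pow_ne_of_forall_ne_zero [DivisionRing K] (v : Valuation K Γ₀) {a : K} (ha : a ≠ 0)
    {n : ℕ} (h : ∀ x : K, x ≠ 0 → v x ^ n ≠ v a) (x : K) : v x ^ n ≠ v a := by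
  rcases eq_or_ne x 0 with rfl | hx
  · rcases n.eq_zero_or_pos with rfl | hn
    · simpa using h 1 one_ne_zero
    · rw [v.map_zero, zero_pow hn.ne']
      exact (v.ne_zero_iff.mpr ha).symm
  · exact h x hx

theorem map_add_div_add_of_ne [DivisionRing K] (v : Valuation K Γ₀) {t a b : K}
    (ha : v t ≠ v a) (hb : v t ≠ v b) :
    v ((t + a) / (t + b)) = max (v t) (v a) / max (v t) (v b) := by
  rw [v.map_div, v.map_add_of_distinct_val ha, v.map_add_of_distinct_val hb]

end Valuation

theorem val_of_skolem_aux_function_general {K Γ₀ : Type*} [Field K]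
    [LinearOrderedCommGroupWithZero Γ₀] (v : Valuation K Γ₀)
    (a b c : K) (ha0 : a ≠ 0) (hb0 : b ≠ 0)
    (hab : v a < v b)
    (n : ℕ)
    (hna : ∀ x : K, x ≠ 0 → v x ^ n ≠ v a) (hnb : ∀ x : K, x ≠ 0 → v x ^ n ≠ v b) :
    ∀ d : K,
      (v b < v (d - c) ^ n → v (((d - c) ^ n + a) / ((d - c) ^ n + b)) = 1) ∧
      (v a < v (d - c) ^ n → v (d - c) ^ n < v b →
        v (((d - c) ^ n + a) / ((d - c) ^ n + b)) = v (d - c) ^ n / v b) ∧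
      (v (d - c) ^ n < v a →
        v (((d - c) ^ n + a) / ((d - c) ^ n + b)) = v a / v b) ∧
      v (((d - c) ^ n + a) / ((d - c) ^ n + b)) ≤ 1 := by
  intro d
  have hφ := v.map_add_div_add_of_ne (t := (d - c) ^ n) (a := a) (b := b)
    (by rw [v.map_pow]; exact v.pow_ne_of_forall_ne_zero ha0 hna (d - c))
    (by rw [v.map_pow]; exact v.pow_ne_of_forall_ne_zero hb0 hnb (d - c))
  rw [v.map_pow] at hφ
  refine ⟨fun h => ?_, fun h₁ h₂ => ?_, fun h => ?_, ?_⟩ <;> rw [hφ]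
  · rw [max_eq_left (hab.trans h).le, max_eq_left h.le, div_self (zero_le.trans_lt h).ne']
  · rw [max_eq_left h₁.le, max_eq_right h₂.le]
  · rw [max_eq_right h.le, max_eq_right (h.trans hab).le]
  · exact div_le_one_of_le₀ (max_le_max_left _ hab.le) zero_le

/-- Let `v` be a valuation on `K` (written multiplicatively, so the additive condition
`v(a), v(b) > 0`, `v(a) > v(b)` becomes `v a < 1`, `v b < 1`, `v a < v b`), and suppose neither
`v(a)` nor `v(b)` is an `n`-th power in the value group (i.e. `v(a)/n, v(b)/n ∉ Γ`).  Let
`φ(x) = ((x−c)ⁿ + a)/((x−c)ⁿ + b)`.  Then for every `d ∈ K` the value `v(φ(d))` is as computed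
case by case below; in particular `φ(d)` lies in the valuation ring for every `d ∈ K`. -/
theorem val_of_skolem_aux_function {K Γ₀ : Type*} [Field K]
    [LinearOrderedCommGroupWithZero Γ₀] (v : Valuation K Γ₀)
    (a b c : K) (ha0 : a ≠ 0) (hb0 : b ≠ 0)
    (ha1 : v a < 1) (hb1 : v b < 1) (hab : v a < v b)
    (n : ℕ) (hn : 0 < n)
    (hna : ∀ x : K, x ≠ 0 → v x ^ n ≠ v a) (hnb : ∀ x : K, x ≠ 0 → v x ^ n ≠ v b) :
    ∀ d : K,
      (v b < v (d - c) ^ n → v (((d - c) ^ n + a) / ((d - c) ^ n + b)) = 1) ∧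
      (v a < v (d - c) ^ n → v (d - c) ^ n < v b →
        v (((d - c) ^ n + a) / ((d - c) ^ n + b)) = v (d - c) ^ n / v b) ∧
      (v (d - c) ^ n < v a →
        v (((d - c) ^ n + a) / ((d - c) ^ n + b)) = v a / v b) ∧
      v (((d - c) ^ n + a) / ((d - c) ^ n + b)) ≤ 1 :=
  val_of_skolem_aux_function_general v a b c ha0 hb0 hab n hna hnb
end

section
/- Let D be a domain with fraction field K and E ⊆ K a strongly coherent set for Int^R(E,D). Then for every nonzero φ ∈ K(x) and every nonzero finitely-generated ideal I of Int^R(E,D) with φI ⊆ Int^R(E,D), one has (φI)^Sk = φ·I^Sk. -/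
/-!
Away from the finitely many zeros and poles of `φ`, multiplication by `φ(a)` is a bijection of `K`
carrying the value ideal `I(a)` onto `(φI)(a)`. Hence `g(a) ∈ (φI)(a)` and `(φ⁻¹g)(a) ∈ I(a)` are
equivalent for all but finitely many `a ∈ E`, and strong coherence, applied to `I` and to the
finitely generated ideal `φI`, turns each cofinite condition into membership in the Skolem closure
(in particular it shows `φ⁻¹g ∈ Int^R(E,D)`).
-/

variable {K : Type*} [Field K]

/-- The Skolem closure of an ideal `I` of `Int^R(E,D)`: the elements `g` whose value `g(a)`
lies in the value ideal `I(a)` for every `a ∈ E`. -/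
def SkClosure {K : Type*} [Field K] (E : Set K) (D : Subring K) (I : Ideal ↥(IntR E D)) :
    Set ↥(IntR E D) :=
  {g | ∀ a ∈ E, ∃ ρ ∈ I,
    RatFunc.eval (RingHom.id K) a (ρ : RatFunc K) = RatFunc.eval (RingHom.id K) a (g : RatFunc K)}

/-- `E` is strongly coherent for `Int^R(E,D)` if any rational function whose value lies in the
value ideal `I(a)` of a finitely generated ideal `I` for all but finitely many `a ∈ E` belongs
to the Skolem closure of `I`. -/
def StronglyCoherent {K : Type*} [Field K] (E : Set K) (D : Subring K) : Prop :=
  ∀ I : Ideal ↥(IntR E D), I.FG → ∀ ψ : RatFunc K,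
    {a ∈ E | ¬ (ψ.denom.eval₂ (RingHom.id K) a ≠ 0 ∧ ∃ ρ ∈ I,
      RatFunc.eval (RingHom.id K) a (ρ : RatFunc K) =
        RatFunc.eval (RingHom.id K) a ψ)}.Finite →
    ∃ g : ↥(IntR E D), (g : RatFunc K) = ψ ∧ g ∈ SkClosure E D I

open Polynomial RatFunc

lemma RatFunc.denom_eval₂_ne_zero_of_mul_eq {φ ψ g : RatFunc K} {a : K}
    (hn : φ.num.eval₂ (RingHom.id K) a ≠ 0) (hg : g.denom.eval₂ (RingHom.id K) a ≠ 0)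
    (h : φ * ψ = g) : ψ.denom.eval₂ (RingHom.id K) a ≠ 0 := by
  have hφ : φ ≠ 0 := by rintro rfl; simp at hn
  have hψ : ψ = algebraMap K[X] (RatFunc K) (g.num * φ.denom) /
      algebraMap K[X] (RatFunc K) (g.denom * φ.num) := by
    rw [map_mul, map_mul, ← div_mul_div_comm, num_div_denom, ← inv_div, num_div_denom, ← h,
      ← div_eq_mul_inv, mul_div_cancel_left₀ _ hφ]
  have hq : g.denom * φ.num ≠ 0 := mul_ne_zero g.denom_ne_zero (num_ne_zero hφ)
  refine eval₂_ne_zero_of_dvd ((denom_dvd hq).mpr ⟨_, hψ⟩) ?_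
  rw [eval₂_mul]
  exact mul_ne_zero hg hn

lemma RatFunc.finite_setOf_num_or_denom_eval₂_eq_zero {φ : RatFunc K} (hφ : φ ≠ 0) :
    {a | φ.num.eval₂ (RingHom.id K) a = 0 ∨ φ.denom.eval₂ (RingHom.id K) a = 0}.Finite :=
  (finite_setOfPred_isRoot (num_ne_zero hφ)).union (finite_setOfPred_isRoot φ.denom_ne_zero)

lemma RatFunc.eval_mul_eq_eval_mul_iff {φ ψ χ : RatFunc K} {a : K}
    (hn : φ.num.eval₂ (RingHom.id K) a ≠ 0) (hd : φ.denom.eval₂ (RingHom.id K) a ≠ 0)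
    (hψ : ψ.denom.eval₂ (RingHom.id K) a ≠ 0) (hχ : χ.denom.eval₂ (RingHom.id K) a ≠ 0) :
    eval (RingHom.id K) a (φ * ψ) = eval (RingHom.id K) a (φ * χ) ↔
      eval (RingHom.id K) a ψ = eval (RingHom.id K) a χ := by
  rw [RatFunc.eval_mul _ _ hd hψ, RatFunc.eval_mul _ _ hd hχ]
  exact mul_right_inj' (div_ne_zero hn hd)

lemma Ideal.fg_of_mem_iff_exists_mul {L : Type*} [CommRing L] {A : Subring L} {I J : Ideal A}
    (hI : I.FG) (φ : L) (hmul : ∀ ψ ∈ I, φ * ψ ∈ A)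
    (hJ : ∀ g : A, g ∈ J ↔ ∃ ψ ∈ I, (g : L) = φ * ψ) : J.FG := by
  let f : I →ₗ[A] A :=
    { toFun := fun ψ => ⟨φ * ψ, hmul ψ ψ.2⟩
      map_add' := fun ψ χ => Subtype.ext (mul_add _ _ _)
      map_smul' := fun r ψ => Subtype.ext (mul_left_comm _ _ _) }
  have hJf : J = LinearMap.range f := by
    ext g
    simp [hJ, f, Subtype.ext_iff, eq_comm]
  have : Module.Finite A I := Module.Finite.iff_fg.mpr hI
  exact hJf ▸ Submodule.fg_range f

lemma StronglyCoherent.exists_mem_skClosure {E : Set K} {D : Subring K}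
    (hSC : StronglyCoherent E D) {I : Ideal (IntR E D)} (hI : I.FG) (ψ : RatFunc K)
    {Z : Set K} (hZ : Z.Finite)
    (hψ : ∀ a ∈ E, a ∉ Z → ψ.denom.eval₂ (RingHom.id K) a ≠ 0 ∧
      ∃ ρ ∈ I, eval (RingHom.id K) a ρ = eval (RingHom.id K) a ψ) :
    ∃ g : IntR E D, (g : RatFunc K) = ψ ∧ g ∈ SkClosure E D I :=
  hSC I hI ψ <| hZ.subset fun a ⟨haE, hbad⟩ => by_contra fun haZ => hbad (hψ a haE haZ)

lemma StronglyCoherent.mem_skClosure {E : Set K} {D : Subring K} (hSC : StronglyCoherent E D)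
    {I : Ideal (IntR E D)} (hI : I.FG) (g : IntR E D) {Z : Set K} (hZ : Z.Finite)
    (hg : ∀ a ∈ E, a ∉ Z → ∃ ρ ∈ I, eval (RingHom.id K) a ρ = eval (RingHom.id K) a g) :
    g ∈ SkClosure E D I := by
  obtain ⟨g', hg', hmem⟩ :=
    hSC.exists_mem_skClosure hI g hZ fun a haE haZ => ⟨(g.2 a haE).1, hg a haE haZ⟩
  rwa [← Subtype.ext hg']

theorem skClosure_smul_general {K : Type*} [Field K] (D : Subring K) (E : Set K)
    (hSC : StronglyCoherent E D)
    (φ : RatFunc K) (hφ : φ ≠ 0)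
    (I : Ideal ↥(IntR E D)) (hIfg : I.FG)
    (hmul : ∀ ψ : ↥(IntR E D), ψ ∈ I → φ * (ψ : RatFunc K) ∈ IntR E D)
    (J : Ideal ↥(IntR E D))
    (hJ : ∀ g : ↥(IntR E D), g ∈ J ↔ ∃ ψ ∈ I, (g : RatFunc K) = φ * (ψ : RatFunc K)) :
    SkClosure E D J =
      {g : ↥(IntR E D) | ∃ h ∈ SkClosure E D I, (g : RatFunc K) = φ * (h : RatFunc K)} := by
  have hJfg : J.FG := Ideal.fg_of_mem_iff_exists_mul hIfg φ hmul hJ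
  have hZ := finite_setOf_num_or_denom_eval₂_eq_zero hφ
  ext g
  constructor
  · intro hg
    have hφψ : φ * (φ⁻¹ * g) = g := mul_inv_cancel_left₀ hφ g
    obtain ⟨h, hh, hSk⟩ := hSC.exists_mem_skClosure hIfg (φ⁻¹ * g) hZ fun a haE haZ => by
      simp only [Set.mem_ofPred_eq, not_or] at haZ
      have hψ := denom_eval₂_ne_zero_of_mul_eq haZ.1 (g.2 a haE).1 hφψ
      obtain ⟨ρ, hρJ, hρ⟩ := hg a haE
      obtain ⟨χ, hχI, hρχ⟩ := (hJ ρ).mp hρJ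
      refine ⟨hψ, χ, hχI, ?_⟩
      rw [← eval_mul_eq_eval_mul_iff haZ.1 haZ.2 (χ.2 a haE).1 hψ, ← hρχ, hρ, hφψ]
    exact ⟨h, hSk, by rw [hh, hφψ]⟩
  · rintro ⟨h, hSk, hgh⟩
    refine hSC.mem_skClosure hJfg g hZ fun a haE haZ => ?_
    simp only [Set.mem_ofPred_eq, not_or] at haZ
    obtain ⟨ρ, hρI, hρ⟩ := hSk a haE
    refine ⟨⟨φ * ρ, hmul ρ hρI⟩, (hJ _).mpr ⟨ρ, hρI, rfl⟩, ?_⟩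
    rw [hgh]
    exact (eval_mul_eq_eval_mul_iff haZ.1 haZ.2 (ρ.2 a haE).1 (h.2 a haE).1).mpr hρ

/-- If `E` is strongly coherent for `Int^R(E,D)`, `φ ∈ K(x)` is nonzero, and `I` is a nonzero
finitely generated ideal with `φI ⊆ Int^R(E,D)`, then `(φI)^Sk = φ·I^Sk`. -/
theorem skClosure_smul {K : Type*} [Field K] (D : Subring K) (E : Set K)
    (hSC : StronglyCoherent E D)
    (φ : RatFunc K) (hφ : φ ≠ 0)
    (I : Ideal ↥(IntR E D)) (hI0 : I ≠ ⊥) (hIfg : I.FG)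
    (hmul : ∀ ψ : ↥(IntR E D), ψ ∈ I → φ * (ψ : RatFunc K) ∈ IntR E D)
    (J : Ideal ↥(IntR E D))
    (hJ : ∀ g : ↥(IntR E D), g ∈ J ↔ ∃ ψ ∈ I, (g : RatFunc K) = φ * (ψ : RatFunc K)) :
    SkClosure E D J =
      {g : ↥(IntR E D) | ∃ h ∈ SkClosure E D I, (g : RatFunc K) = φ * (h : RatFunc K)} :=
  skClosure_smul_general D E hSC φ hφ I hIfg hmul J hJ
end

section
/- Let D be a domain, E ⊆ Frac(D), and ⋆₁, ⋆₂ integrally compatible star operations on D and on Int^R(E,D) respectively. If 𝔭 is a ⋆₁-prime of D (a prime with 𝔭^⋆₁ = 𝔭), then for every a ∈ E the pointed prime 𝔓_{𝔭,a} = {φ ∈ Int^R(E,D) | φ(a) ∈ 𝔭} is a ⋆₂-prime of Int^R(E,D). -/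
/-! Evaluation at `a` is surjective (constants), so it maps `𝔓 = f⁻¹(𝔭)` onto `𝔭`. Integral
compatibility then gives `f(𝔓^⋆₂) ⊆ (f(𝔓^⋆₂))^⋆₁ = (f 𝔓)^⋆₁ = 𝔭^⋆₁ = 𝔭`, i.e. `𝔓^⋆₂ ⊆ 𝔓`. -/

variable {K : Type*} [Field K]

/-- A star operation, restricted to the (nonzero) integral ideals of a domain `R`. -/
structure IdealStarOp (R : Type*) [CommRing R] where
  star : Ideal R → Ideal R
  star_principal : ∀ a : R, star (Ideal.span {a}) = Ideal.span {a}
  star_smul : ∀ a : R, a ≠ 0 → ∀ I : Ideal R, I ≠ ⊥ →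
    star (Ideal.span {a} * I) = Ideal.span {a} * star I
  le_star : ∀ I : Ideal R, I ≠ ⊥ → I ≤ star I
  star_mono : ∀ I J : Ideal R, I ≠ ⊥ → I ≤ J → star I ≤ star J
  star_idem : ∀ I : Ideal R, I ≠ ⊥ → star (star I) = star I

theorem RatFunc.C_mem_IntR (E : Set K) (D : Subring K) (d : D) : RatFunc.C (d : K) ∈ IntR E D :=
  fun _ _ => ⟨by simp [RatFunc.denom_C], by simp [RatFunc.eval_C]⟩

theorem evalHom_surjective (E : Set K) (D : Subring K) (a : K) (ha : a ∈ E) :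
    Function.Surjective (evalHom E D a ha) :=
  fun d => ⟨⟨RatFunc.C (d : K), RatFunc.C_mem_IntR E D d⟩, Subtype.ext (RatFunc.eval_C _ _)⟩

namespace IdealStarOp

variable {R S : Type*} [CommRing R] [CommRing S]

theorem star_comap_eq_of_compatible (s₁ : IdealStarOp S) (s₂ : IdealStarOp R) {f : R →+* S}
    (hf : Function.Surjective f)
    (hcompat : ∀ I : Ideal R, s₁.star ((s₂.star I).map f) = s₁.star (I.map f))
    {p : Ideal S} (hp0 : p ≠ ⊥) (hps : s₁.star p = p) :
    s₂.star (p.comap f) = p.comap f := by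
  have hmap : (p.comap f).map f = p := Ideal.map_comap_of_surjective f hf p
  have hP0 : p.comap f ≠ ⊥ := by
    rintro hP
    rw [hP, Ideal.map_bot] at hmap
    exact hp0 hmap.symm
  have hle : p.comap f ≤ s₂.star (p.comap f) := s₂.le_star _ hP0
  have hmap_star0 : (s₂.star (p.comap f)).map f ≠ ⊥ :=
    ne_bot_of_le_ne_bot hp0 (hmap.ge.trans (Ideal.map_mono hle))
  refine le_antisymm (Ideal.map_le_iff_le_comap.mp ?_) hle
  calc (s₂.star (p.comap f)).map f
      ≤ s₁.star ((s₂.star (p.comap f)).map f) := s₁.le_star _ hmap_star0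
    _ = s₁.star p := by rw [hcompat, hmap]
    _ = p := hps

end IdealStarOp

/-- If `⋆₁` (on `D`) and `⋆₂` (on `Int^R(E,D)`) are integrally compatible star operations and
`𝔭` is a (nonzero) `⋆₁`-prime of `D`, then for every `a ∈ E` the pointed prime
`𝔓_{𝔭,a} = {φ | φ(a) ∈ 𝔭}` is a `⋆₂`-prime of `Int^R(E,D)`. -/
theorem pointed_prime_star_prime {K : Type*} [Field K] (D : Subring K) (E : Set K)
    (s1 : IdealStarOp ↥D) (s2 : IdealStarOp ↥(IntR E D))
    (hcompat : ∀ I : Ideal ↥(IntR E D), ∀ a : K, ∀ ha : a ∈ E,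
      s1.star (Ideal.map (evalHom E D a ha) (s2.star I)) =
        s1.star (Ideal.map (evalHom E D a ha) I))
    (p : Ideal ↥D) (hp : p.IsPrime) (hp0 : p ≠ ⊥) (hps : s1.star p = p)
    (a : K) (ha : a ∈ E) :
    (Ideal.comap (evalHom E D a ha) p).IsPrime ∧
      s2.star (Ideal.comap (evalHom E D a ha) p) = Ideal.comap (evalHom E D a ha) p :=
  ⟨hp.comap _, s1.star_comap_eq_of_compatible s2 (evalHom_surjective E D a ha)
    (fun I => hcompat I a ha) hp0 hps⟩
end

section
/- Let D = ⋂_λ V_λ be an intersection of a family of valuation overrings (inside Frac(D)), let ⋆ be the star operation I^⋆ = ⋂_λ I·V_λ, and let 𝔭_λ be the center of V_λ in D. If I is a proper ideal of D with I^{⋆_f} = I, then for every nonzero finitely-generated ideal J ⊆ I there exists λ with J ⊆ 𝔭_λ; consequently I ⊆ lim_ℱ 𝔭_λ for some filter ℱ on {𝔭_λ}. -/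
/-!
If a nonzero finitely generated `J ⊆ I` lay in no center `𝔭_λ`, it would contain a unit of every
`V_λ`, so `1 ∈ J V_λ` for all `λ`; then `1 ∈ J^⋆ ⊆ I^{⋆_f} = I`, contradicting `I ≠ D`. Applied to
the ideals generated by finite subsets of `I`, this says that the sets `{λ | x ∈ 𝔭_λ}`, `x ∈ I`,
have the finite intersection property, so they lie in a common proper filter.
-/

open Filter

theorem Filter.exists_neBot_forall_mem {ι α : Type*} (s : ι → Set α)
    (h : ∀ t : Finset ι, (⋂ i ∈ t, s i).Nonempty) : ∃ F : Filter α, F.NeBot ∧ ∀ i, s i ∈ F := by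
  refine ⟨⨅ i, 𝓟 (s i), ?_, fun i => mem_iInf_of_mem i (mem_principal_self _)⟩
  rw [iInf_eq_iInf_finset]
  simp_rw [iInf_principal_finset]
  refine iInf_neBot_of_directed' (Antitone.directed_ge fun t t' htt' => ?_)
    fun t => principal_neBot_iff.2 (h t)
  exact principal_mono.2 (Set.biInter_subset_biInter_left htt')

theorem Submodule.one_mem_span_of_isUnit {R A : Type*} [CommSemiring R] [Semiring A]
    [Algebra R A] {s : Set A} {r : R} (hr : IsUnit r) (hrs : algebraMap R A r ∈ s) :
    (1 : A) ∈ Submodule.span R s := by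
  obtain ⟨u, rfl⟩ := hr
  have := Submodule.smul_mem _ (↑u⁻¹ : R) (Submodule.subset_span hrs)
  rwa [Algebra.smul_def, ← map_mul, Units.inv_mul, map_one] at this

theorem Subring.one_mem_span_of_not_le_comap_maximalIdeal {K : Type*} [Field K] {D V : Subring K}
    (h : D ≤ V) [IsLocalRing V] {J : Ideal D}
    (hJ : ¬J ≤ (IsLocalRing.maximalIdeal V).comap (Subring.inclusion h)) :
    (1 : K) ∈ Submodule.span V (Subtype.val '' (J : Set D)) := by
  obtain ⟨x, hxJ, hx⟩ := SetLike.not_le_iff_exists.mp hJ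
  rw [Ideal.mem_comap, IsLocalRing.mem_maximalIdeal, mem_nonunits_iff, not_not] at hx
  exact Submodule.one_mem_span_of_isUnit hx ⟨x, hxJ, rfl⟩

theorem starf_ideal_le_filterLimit_general {K Λ : Type*} [Field K] [Nonempty Λ] (D : Subring K)
    (V : Λ → Subring K) [∀ l, ValuationRing ↥(V l)]
    (hle : ∀ l, D ≤ V l)
    (p : Λ → Ideal ↥D)
    (hp : ∀ l, p l = (IsLocalRing.maximalIdeal ↥(V l)).comap (Subring.inclusion (hle l)))
    (I : Ideal ↥D) (hItop : I ≠ ⊤)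
    (hIstar : ∀ J : Ideal ↥D, J ≠ ⊥ → J.FG → J ≤ I → ∀ x : ↥D,
      (∀ l, (x : K) ∈ Submodule.span ↥(V l) (Subtype.val '' (J : Set ↥D))) → x ∈ I) :
    (∀ J : Ideal ↥D, J ≠ ⊥ → J.FG → J ≤ I → ∃ l, J ≤ p l) ∧
      ∃ F : Filter Λ, F.NeBot ∧ ∀ x ∈ I, {l | x ∈ p l} ∈ F := by
  have exists_le_center : ∀ J : Ideal D, J ≠ ⊥ → J.FG → J ≤ I → ∃ l, J ≤ p l := by
    intro J hJ0 hJfg hJI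
    by_contra! hJ
    refine hItop (I.eq_top_iff_one.2 (hIstar J hJ0 hJfg hJI 1 fun l => ?_))
    simpa using Subring.one_mem_span_of_not_le_comap_maximalIdeal (hle l) (hp l ▸ hJ l)
  refine ⟨exists_le_center, ?_⟩
  obtain ⟨F, hF, hFmem⟩ := Filter.exists_neBot_forall_mem (fun x : I => {l | (x : D) ∈ p l})
    fun t => by
      let J := Ideal.span (Subtype.val '' (t : Set I))
      have hJfg : J.FG := Submodule.fg_span (t.finite_toSet.image _)
      have hJI : J ≤ I := Ideal.span_le.2 (by rintro _ ⟨x, -, rfl⟩; exact x.2)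
      obtain ⟨l, hl⟩ : ∃ l, J ≤ p l := (eq_or_ne J ⊥).elim
        (fun h => ⟨Classical.arbitrary Λ, h ▸ bot_le⟩) fun h => exists_le_center J h hJfg hJI
      exact ⟨l, Set.mem_iInter₂.2 fun x hx => hl (Ideal.subset_span ⟨x, hx, rfl⟩)⟩
  exact ⟨F, hF, fun x hx => hFmem ⟨x, hx⟩⟩

/-- Let `D = ⋂ V_λ` be an intersection of a family of valuation overrings, let `⋆` be the star
operation `I^⋆ = ⋂ I V_λ`, and let `𝔭_λ` be the center of `V_λ` in `D`.  If `I` is a proper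
ideal of `D` with `I^{⋆_f} = I`, then every nonzero finitely generated ideal `J ⊆ I` is
contained in some `𝔭_λ`; consequently `I` is contained in a filter limit of the `𝔭_λ`. -/
theorem starf_ideal_le_filterLimit {K Λ : Type*} [Field K] [Nonempty Λ] (D : Subring K)
    (V : Λ → Subring K) [∀ l, ValuationRing ↥(V l)]
    (hle : ∀ l, D ≤ V l)
    (hint : (D : Set K) = ⋂ l, ↑(V l))
    (p : Λ → Ideal ↥D)
    (hp : ∀ l, p l = (IsLocalRing.maximalIdeal ↥(V l)).comap (Subring.inclusion (hle l)))
    (I : Ideal ↥D) (hItop : I ≠ ⊤)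
    (hIstar : ∀ J : Ideal ↥D, J ≠ ⊥ → J.FG → J ≤ I → ∀ x : ↥D,
      (∀ l, (x : K) ∈ Submodule.span ↥(V l) (Subtype.val '' (J : Set ↥D))) → x ∈ I) :
    (∀ J : Ideal ↥D, J ≠ ⊥ → J.FG → J ≤ I → ∃ l, J ≤ p l) ∧
      ∃ F : Filter Λ, F.NeBot ∧ ∀ x ∈ I, {l | x ∈ p l} ∈ F :=
  starf_ideal_le_filterLimit_general D V hle p hp I hItop hIstar
end

section
/- Let V be a valuation domain with valuation v, value group Γ, principal maximal ideal 𝔪 = tV, and fraction field K. Define θ(x) = t(1+x⁴)/((1+tx²)(t+x²)). Then θ(a) ∈ V for every a ∈ K; more precisely v(θ(a)) > 0 when v(a) = 0, and θ(a) ∈ 1 + 𝔪 when v(a) ≠ 0. -/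
/-!
Subtracting `1` gives `θ(x) - 1 = -x²(1+t²)/((1+tx²)(t+x²))`, and `θ(x⁻¹) = θ(x)`, so it
suffices to treat `v x ≤ 1`. If `v x = 1`, both factors of the denominator are units and
`v θ(x) ≤ v t`. If `v x < 1`, then `v x ≤ v t` because `𝔪 = tV`, hence `v (x²) < v t`; the
denominator then has valuation `v t`, and `θ(x) - 1` has valuation `v (x²) / v t < 1`.
-/

section Field

variable {K : Type*} [Field K]

def theta (t x : K) : K :=
  t * (1 + x ^ 4) / ((1 + t * x ^ 2) * (t + x ^ 2))

theorem theta_inv (t : K) {x : K} (hx : x ≠ 0) : theta t x⁻¹ = theta t x := by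
  unfold theta
  rw [← mul_div_mul_right _ _ (pow_ne_zero 4 hx)]
  congr 1 <;> field_simp <;> ring

theorem theta_eq_one_add {t x : K} (h₁ : 1 + t * x ^ 2 ≠ 0) (h₂ : t + x ^ 2 ≠ 0) :
    theta t x = 1 + -(x ^ 2 * (1 + t ^ 2)) / ((1 + t * x ^ 2) * (t + x ^ 2)) := by
  unfold theta
  field_simp
  ring

end Field

namespace Valuation

variable {K Γ₀ : Type*} [Field K] [LinearOrderedCommGroupWithZero Γ₀] (v : Valuation K Γ₀)
  {t x : K}

theorem map_theta_le_of_map_eq_one (hx : v x = 1) (ht : v t < 1) :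
    v (theta t x) ≤ v t := by
  have hx₂ : v (x ^ 2) = 1 := by rw [map_pow, hx, one_pow]
  have hx₄ : v (x ^ 4) = 1 := by rw [map_pow, hx, one_pow]
  have hden₁ : v (1 + t * x ^ 2) = 1 :=
    v.map_one_add_of_lt (by rwa [map_mul, hx₂, mul_one])
  have hden₂ : v (t + x ^ 2) = 1 := by
    rw [v.map_add_eq_of_lt_right (by rwa [hx₂]), hx₂]
  have hnum : v (1 + x ^ 4) ≤ 1 :=
    (v.map_add 1 _).trans (max_le v.map_one.le hx₄.le)
  unfold theta
  rw [map_div₀, map_mul, map_mul, hden₁, hden₂, one_mul, div_one]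
  exact mul_le_of_le_one_right' hnum

theorem exists_theta_eq_one_add_of_map_sq_lt (hx : v (x ^ 2) < v t) (ht : v t < 1) :
    ∃ m, v m < 1 ∧ theta t x = 1 + m := by
  have ht₀ : v t ≠ 0 := (zero_le.trans_lt hx).ne'
  have hden₁ : v (1 + t * x ^ 2) = 1 := by
    refine v.map_one_add_of_lt ?_
    rw [map_mul]
    exact (mul_le_of_le_one_left' ht.le).trans_lt (hx.trans ht)
  have hden₂ : v (t + x ^ 2) = v t := v.map_add_eq_of_lt_left hx
  have ht₂ : v (1 + t ^ 2) = 1 :=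
    v.map_one_add_of_lt (by rw [map_pow]; exact pow_lt_one₀ zero_le ht two_ne_zero)
  refine ⟨_, ?_, theta_eq_one_add (v.ne_zero_iff.1 (by rw [hden₁]; exact one_ne_zero))
    (v.ne_zero_iff.1 (by rwa [hden₂]))⟩
  rw [map_div₀, map_neg, map_mul, map_mul, hden₁, hden₂, ht₂, mul_one, one_mul]
  exact (div_lt_one₀ (pos_iff_ne_zero.2 ht₀)).2 hx

theorem exists_theta_eq_one_add_of_map_ne_one (ht₀ : t ≠ 0) (ht : v t < 1)
    (hprin : ∀ y : K, v y < 1 → v y ≤ v t) (hx : v x ≠ 1) :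
    ∃ m, v m < 1 ∧ theta t x = 1 + m := by
  have hsmall : ∀ y : K, v y < 1 → ∃ m, v m < 1 ∧ theta t y = 1 + m := fun y hy =>
    v.exists_theta_eq_one_add_of_map_sq_lt
      (calc v (y ^ 2) = v y ^ 2 := map_pow v y 2
        _ ≤ v t ^ 2 := by gcongr; exact hprin y hy
        _ < v t := pow_lt_self_of_lt_one₀ (v.pos_iff.2 ht₀) ht one_lt_two) ht
  rcases hx.lt_or_gt with hlt | hgt
  · exact hsmall x hlt
  · have hx₀ : x ≠ 0 := v.ne_zero_iff.1 (zero_lt_one.trans hgt).ne'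
    rw [← theta_inv t hx₀]
    exact hsmall x⁻¹ ((v.one_lt_val_iff hx₀).1 hgt)

end Valuation

/-- Let `V` be the valuation ring of a valuation `v` on `K`, with principal maximal ideal
`𝔪 = tV` (multiplicatively: `v t < 1` and every `x` with `v x < 1` has `v x ≤ v t`).  Let
`θ(x) = t(1+x⁴)/((1+tx²)(t+x²))`.  Then `θ(a) ∈ V` for every `a ∈ K`; more precisely
`v(θ(a)) < 1` when `v a = 1`, and `θ(a) ∈ 1 + 𝔪` when `v a ≠ 1`. -/
theorem theta_integer_valued {K Γ₀ : Type*} [Field K] [LinearOrderedCommGroupWithZero Γ₀]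
    (v : Valuation K Γ₀) (t : K) (ht0 : t ≠ 0) (ht1 : v t < 1)
    (hprin : ∀ x : K, v x < 1 → v x ≤ v t) :
    ∀ a : K,
      v (t * (1 + a ^ 4) / ((1 + t * a ^ 2) * (t + a ^ 2))) ≤ 1 ∧
      (v a = 1 → v (t * (1 + a ^ 4) / ((1 + t * a ^ 2) * (t + a ^ 2))) < 1) ∧
      (v a ≠ 1 → ∃ m : K, v m < 1 ∧
        t * (1 + a ^ 4) / ((1 + t * a ^ 2) * (t + a ^ 2)) = 1 + m) := by
  intro a
  change v (theta t a) ≤ 1 ∧ (v a = 1 → v (theta t a) < 1) ∧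
    (v a ≠ 1 → ∃ m : K, v m < 1 ∧ theta t a = 1 + m)
  rcases eq_or_ne (v a) 1 with ha | ha
  · have hθ := v.map_theta_le_of_map_eq_one ha ht1
    exact ⟨hθ.trans ht1.le, fun _ => hθ.trans_lt ht1, fun h => absurd ha h⟩
  · obtain ⟨m, hm, hθ⟩ := v.exists_theta_eq_one_add_of_map_ne_one ht0 ht1 hprin ha
    refine ⟨?_, fun h => absurd h ha, fun _ => ⟨m, hm, hθ⟩⟩
    rw [hθ, v.map_one_add_of_lt hm]
end
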